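/- Let ε > 0 and set F(τ,p) = τ + p²/2. For every s > 0, the unique minimizer of F over D⁺u_ε(s,0) is (τ(s),p(s)) = (−1/(2(s+ε)²), 0), and for every 0 < t₀ ≤ s one has F(τ(s),p(s)) = ((t₀ + ε)/(s + ε))² · F(τ(t₀),p(t₀)). -/

import Mathlib

open Filter Topology Set

noncomputable section

/-- `u_ε(t,x) = (|x| − 1)²/(2(t + ε))`. -/
def uEps (ε : ℝ) (X : ℝ × ℝ) : ℝ := (|X.2| - 1) ^ 2 / (2 * (X.1 + ε))

/-- Superdifferential of `w : ℝ × ℝ → ℝ` at `X` (with the Euclidean norm on `ℝ²`):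
`P ∈ D⁺w(X)` iff `limsup_{Y→X} (w(Y)−w(X)−⟨P,Y−X⟩)/|Y−X| ≤ 0`. -/
def superDiff2 (w : ℝ × ℝ → ℝ) (X P : ℝ × ℝ) : Prop :=
  ∀ ε > 0, ∀ᶠ Y in 𝓝[≠] X,
    w Y - w X - (P.1 * (Y.1 - X.1) + P.2 * (Y.2 - X.2)) ≤
      ε * Real.sqrt ((Y.1 - X.1) ^ 2 + (Y.2 - X.2) ^ 2)

/-!
At `(s, 0)` the function `u_ε` is touched from above by `φ(t) = 1/(2(t + ε))`, since
`(|x| - 1)² ≤ 1` for `|x| ≤ 2`; hence `(φ'(s), 0) ∈ D⁺u_ε(s, 0)`. Conversely, `u_ε` is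
differentiable in `t` along the line `x = 0`, which forces the `t`-component of every element of
`D⁺u_ε(s, 0)` to be `φ'(s) = -1/(2(s + ε)²)`. So `F(τ, p) = φ'(s) + p²/2` on `D⁺u_ε(s, 0)`,
minimized exactly at `p = 0`; the scaling identity is algebra.
-/

lemma eq_zero_of_forall_eventually_mul_sub_le {c x : ℝ}
    (h : ∀ δ > 0, ∀ᶠ t in 𝓝[≠] x, c * (t - x) ≤ δ * |t - x|) : c = 0 := by
  have hbound : ∀ δ > 0, c ≤ δ ∧ -c ≤ δ := by
    intro δ hδ
    obtain ⟨t, ht, hxt⟩ :=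
      (((h δ hδ).filter_mono (nhdsGT_le_nhdsNE x)).and self_mem_nhdsWithin).exists
    obtain ⟨t', ht', hxt'⟩ :=
      (((h δ hδ).filter_mono (nhdsLT_le_nhdsNE x)).and self_mem_nhdsWithin).exists
    rw [abs_of_pos (sub_pos.mpr hxt)] at ht
    rw [abs_of_neg (sub_neg.mpr hxt')] at ht'
    constructor <;> nlinarith
  apply le_antisymm <;> refine le_of_forall_pos_le_add fun δ hδ => ?_ <;> linarith [hbound δ hδ]

namespace superDiff2

variable {w : ℝ × ℝ → ℝ} {s y : ℝ}

lemma of_le_of_hasDerivAt {φ : ℝ → ℝ} {a : ℝ} (hle : ∀ᶠ Y in 𝓝 (s, y), w Y ≤ φ Y.1)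
    (heq : w (s, y) = φ s) (hφ : HasDerivAt φ a s) : superDiff2 w (s, y) (a, 0) := by
  intro δ hδ
  have hlin : ∀ᶠ t in 𝓝 s, ‖φ t - φ s - (t - s) • a‖ ≤ δ * ‖t - s‖ :=
    (hasDerivAt_iff_isLittleO.mp hφ).def hδ
  refine eventually_nhdsWithin_of_eventually_nhds ?_
  filter_upwards [hle, continuousAt_fst.eventually hlin] with Y hY hlinY
  simp only [Real.norm_eq_abs, smul_eq_mul] at hlinY
  have hsqrt : |Y.1 - s| ≤ Real.sqrt ((Y.1 - s) ^ 2 + (Y.2 - y) ^ 2) :=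
    Real.abs_le_sqrt (le_add_of_nonneg_right (sq_nonneg _))
  nlinarith [le_abs_self (φ Y.1 - φ s - (Y.1 - s) * a)]

lemma fst_eq_of_hasDerivAt {P : ℝ × ℝ} {a : ℝ} (hP : superDiff2 w (s, y) P)
    (hw : HasDerivAt (fun t => w (t, y)) a s) : P.1 = a := by
  have hline : Tendsto (fun t => (t, y)) (𝓝[≠] s) (𝓝[≠] (s, y)) :=
    tendsto_nhdsWithin_iff.mpr
      ⟨(continuous_id.prodMk continuous_const).continuousAt.tendsto.mono_left nhdsWithin_le_nhds,
        eventually_nhdsWithin_of_forall fun t ht => by simpa using ht⟩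
  suffices a - P.1 = 0 by linarith
  refine eq_zero_of_forall_eventually_mul_sub_le (x := s) fun δ hδ => ?_
  have hlin : ∀ᶠ t in 𝓝 s, ‖w (t, y) - w (s, y) - (t - s) • a‖ ≤ δ / 2 * ‖t - s‖ :=
    (hasDerivAt_iff_isLittleO.mp hw).def (by positivity)
  filter_upwards [hline.eventually (hP (δ / 2) (by positivity)), nhdsWithin_le_nhds hlin]
    with t hsup hlint
  simp only [sub_self, mul_zero, add_zero, ne_eq, OfNat.ofNat_ne_zero, not_false_eq_true,
    zero_pow, Real.sqrt_sq_eq_abs] at hsup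
  simp only [Real.norm_eq_abs, smul_eq_mul] at hlint
  nlinarith [neg_abs_le (w (t, y) - w (s, y) - (t - s) * a)]

end superDiff2

lemma uEps_axis (ε t : ℝ) : uEps ε (t, 0) = 1 / (2 * (t + ε)) := by
  simp [uEps]

lemma hasDerivAt_one_div_two_mul_add (ε s : ℝ) (h : s + ε ≠ 0) :
    HasDerivAt (fun t : ℝ => 1 / (2 * (t + ε))) (-1 / (2 * (s + ε) ^ 2)) s := by
  have hlin : HasDerivAt (fun t : ℝ => 2 * (t + ε)) 2 s := by
    simpa using ((hasDerivAt_id s).add_const ε).const_mul 2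
  exact ((hasDerivAt_const s 1).fun_div hlin (by positivity)).congr_deriv (by field_simp; ring)

lemma eventually_uEps_le_one_div_two_mul_add {ε s : ℝ} (h : 0 < s + ε) :
    ∀ᶠ Y in 𝓝 (s, 0), uEps ε Y ≤ 1 / (2 * (Y.1 + ε)) := by
  have ht : ∀ᶠ Y : ℝ × ℝ in 𝓝 (s, 0), -ε < Y.1 :=
    continuousAt_fst.eventually (lt_mem_nhds (by linarith))
  have hx : ∀ᶠ Y : ℝ × ℝ in 𝓝 (s, 0), Y.2 ∈ Ioo (-2 : ℝ) 2 :=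
    continuousAt_snd.eventually (Ioo_mem_nhds (by norm_num) (by norm_num))
  filter_upwards [ht, hx] with Y hY1 hY2
  have hsq : (|Y.2| - 1) ^ 2 ≤ 1 := by
    have : |Y.2| < 2 := abs_lt.mpr hY2
    nlinarith [abs_nonneg Y.2]
  have : 0 < 2 * (Y.1 + ε) := by linarith
  exact div_le_div_of_nonneg_right hsq this.le

lemma superDiff2_uEps_axis {ε s : ℝ} (h : 0 < s + ε) :
    superDiff2 (uEps ε) (s, 0) (-1 / (2 * (s + ε) ^ 2), 0) :=
  superDiff2.of_le_of_hasDerivAt (eventually_uEps_le_one_div_two_mul_add h) (uEps_axis ε s)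
    (hasDerivAt_one_div_two_mul_add ε s h.ne')

lemma fst_eq_of_superDiff2_uEps_axis {ε s τ p : ℝ} (h : 0 < s + ε)
    (hP : superDiff2 (uEps ε) (s, 0) (τ, p)) : τ = -1 / (2 * (s + ε) ^ 2) := by
  refine hP.fst_eq_of_hasDerivAt ?_
  simpa only [uEps_axis] using hasDerivAt_one_div_two_mul_add ε s h.ne'

/-- for every `ε > 0` and `s > 0`, the unique minimizer of
`F(τ,p) = τ + p²/2` over `D⁺u_ε(s,0)` is `(τ(s),p(s)) = (−1/(2(s+ε)²), 0)`, and for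
`0 < t₀ ≤ s` one has `F(τ(s),p(s)) = ((t₀+ε)/(s+ε))² F(τ(t₀),p(t₀))`. -/
theorem statement19 (ε : ℝ) (hε : 0 < ε) (s : ℝ) (hs : 0 < s) :
    (superDiff2 (uEps ε) (s, 0) (-1 / (2 * (s + ε) ^ 2), 0) ∧
     (∀ τ p : ℝ, superDiff2 (uEps ε) (s, 0) (τ, p) →
        -1 / (2 * (s + ε) ^ 2) + (0 : ℝ) ^ 2 / 2 ≤ τ + p ^ 2 / 2) ∧
     (∀ τ p : ℝ, superDiff2 (uEps ε) (s, 0) (τ, p) →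
        (∀ τ' p' : ℝ, superDiff2 (uEps ε) (s, 0) (τ', p') →
          τ + p ^ 2 / 2 ≤ τ' + p' ^ 2 / 2) →
        (τ, p) = (-1 / (2 * (s + ε) ^ 2), (0 : ℝ)))) ∧
    (∀ t₀ : ℝ, 0 < t₀ → t₀ ≤ s →
      -1 / (2 * (s + ε) ^ 2) + (0 : ℝ) ^ 2 / 2 =
        ((t₀ + ε) / (s + ε)) ^ 2 * (-1 / (2 * (t₀ + ε) ^ 2) + (0 : ℝ) ^ 2 / 2)) := by
  have hsε : 0 < s + ε := by linarith
  have hmem := superDiff2_uEps_axis hsε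
  refine ⟨⟨hmem, fun τ p hP => ?_, fun τ p hP hmin => ?_⟩, fun t₀ ht₀ _ => ?_⟩
  · rw [fst_eq_of_superDiff2_uEps_axis hsε hP]
    nlinarith [sq_nonneg p]
  · have hτ := fst_eq_of_superDiff2_uEps_axis hsε hP
    have hp : p = 0 := by nlinarith [sq_nonneg p, hmin _ _ hmem]
    rw [hτ, hp]
  · have : t₀ + ε ≠ 0 := by positivity
    field_simp
    ring
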